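/- arXiv:2501.10028 — 2 statements merged into one kernel-verified Lean document; each statement's English description precedes it below -/
import Mathlib

section
/- For every integer ℓ ≥ 1 and every z ∈ ℂ, φ_ℓ(2z) = 2^{−ℓ} [ e^z φ_ℓ(z) + Σ_{j=1}^{ℓ} φ_j(z)/(ℓ−j)! ]. -/
/-!
Compare Taylor coefficients at `z = 0`. The `n`-th coefficient of `2^ℓ φ_ℓ(2z)` is
`2^(ℓ+n) / (ℓ+n)! = ∑_{m ≤ ℓ+n} 1 / (m! (ℓ+n-m)!)`. The terms with `m ≤ n` form the
Cauchy-product coefficient of `e^z φ_ℓ(z)`, and the term with `m = n + j`, `1 ≤ j ≤ ℓ`, is the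
coefficient of `φ_j(z) / (ℓ-j)!`.
-/

open Finset

/-- For an integer `ℓ ≥ 0` and `z ∈ ℂ`, `φ_ℓ(z) := Σ_{k=0}^∞ z^k/(ℓ+k)!`. -/
noncomputable def phiC (ℓ : ℕ) (z : ℂ) : ℂ := ∑' k : ℕ, z ^ k / ((ℓ + k).factorial : ℂ)

open Nat

section Combinatorics

variable {K : Type*} [Field K] [CharZero K]

theorem sum_range_inv_factorial_mul_factorial_sub (N : ℕ) :
    ∑ m ∈ range (N + 1), ((m ! : K) * (N - m)!)⁻¹ = 2 ^ N / N ! := by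
  have hpow : (2 : K) ^ N = ((2 ^ N : ℕ) : K) := by push_cast; rfl
  rw [hpow, ← Nat.sum_range_choose, Nat.cast_sum, sum_div]
  refine sum_congr rfl fun m hm => ?_
  rw [Nat.cast_choose K (mem_range_succ_iff.mp hm),
    div_div_cancel_left' (Nat.cast_ne_zero.mpr N.factorial_ne_zero)]

theorem sum_range_add_sum_Icc_inv_factorial_mul (ℓ n : ℕ) :
    ∑ i ∈ range (n + 1), ((i ! : K) * (ℓ + (n - i))!)⁻¹ +
        ∑ j ∈ Icc 1 ℓ, (((j + n)! : K) * (ℓ - j)!)⁻¹ =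
      2 ^ (ℓ + n) / (ℓ + n)! := by
  rw [← sum_range_inv_factorial_mul_factorial_sub,
    ← sum_range_add_sum_Ico _ (by omega : n + 1 ≤ ℓ + n + 1)]
  congr 1
  · exact sum_congr rfl fun i hi => by
      rw [show ℓ + (n - i) = ℓ + n - i by have := mem_range_succ_iff.mp hi; omega]
  · rw [← Ico_add_one_right_eq_Icc,
      show Ico (n + 1) (ℓ + n + 1) = Ico (1 + n) (ℓ + 1 + n) by congr 1 <;> omega,
      ← sum_Ico_add']
    exact sum_congr rfl fun j _ => by
      rw [show ℓ + n - (j + n) = ℓ - j by omega]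

end Combinatorics

theorem summable_norm_pow_div_factorial_add (ℓ : ℕ) (z : ℂ) :
    Summable fun k => ‖z ^ k / ((ℓ + k)! : ℂ)‖ := by
  refine (Real.summable_pow_div_factorial ‖z‖).of_nonneg_of_le (fun _ => norm_nonneg _)
    fun k => ?_
  rw [norm_div, norm_pow, Complex.norm_natCast]
  gcongr
  exact Nat.le_add_left k ℓ

theorem hasSum_phiC (ℓ : ℕ) (z : ℂ) : HasSum (fun k => z ^ k / ((ℓ + k)! : ℂ)) (phiC ℓ z) :=
  (summable_norm_pow_div_factorial_add ℓ z).of_norm.hasSum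

theorem hasSum_exp_mul_phiC (ℓ : ℕ) (z : ℂ) :
    HasSum (fun n => z ^ n * ∑ i ∈ range (n + 1), ((i ! : ℂ) * (ℓ + (n - i))!)⁻¹)
      (Complex.exp z * phiC ℓ z) := by
  have hexp := summable_norm_pow_div_factorial_add 0 z
  simp only [zero_add] at hexp
  have hphi := summable_norm_pow_div_factorial_add ℓ z
  have hcauchy := (summable_norm_sum_mul_range_of_summable_norm hexp hphi).of_norm.hasSum
  have hcoeff : (fun n => ∑ i ∈ range (n + 1), z ^ i / (i ! : ℂ) * (z ^ (n - i) / (ℓ + (n - i))!))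
      = fun n => z ^ n * ∑ i ∈ range (n + 1), ((i ! : ℂ) * (ℓ + (n - i))!)⁻¹ := by
    funext n
    rw [mul_sum]
    refine sum_congr rfl fun i hi => ?_
    rw [← pow_mul_pow_sub z (mem_range_succ_iff.mp hi)]
    field_simp
  rwa [← tsum_mul_tsum_eq_tsum_sum_range_of_summable_norm hexp hphi,
    (NormedSpace.expSeries_div_hasSum_exp z).tsum_eq, ← Complex.exp_eq_exp_ℂ,
    (hasSum_phiC ℓ z).tsum_eq, hcoeff] at hcauchy

theorem hasSum_sum_Icc_phiC_div_factorial (ℓ : ℕ) (z : ℂ) :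
    HasSum (fun n => z ^ n * ∑ j ∈ Icc 1 ℓ, (((j + n)! : ℂ) * (ℓ - j)!)⁻¹)
      (∑ j ∈ Icc 1 ℓ, phiC j z / ((ℓ - j)! : ℂ)) := by
  have hcoeff : (fun n => ∑ j ∈ Icc 1 ℓ, z ^ n / ((j + n)! : ℂ) / (ℓ - j)!)
      = fun n => z ^ n * ∑ j ∈ Icc 1 ℓ, (((j + n)! : ℂ) * (ℓ - j)!)⁻¹ := by
    funext n
    rw [mul_sum]
    exact sum_congr rfl fun j _ => by field_simp
  exact hcoeff ▸ hasSum_sum fun j _ => (hasSum_phiC j z).div_const ((ℓ - j)! : ℂ)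

theorem hasSum_two_pow_mul_phiC_two_mul (ℓ : ℕ) (z : ℂ) :
    HasSum (fun n => z ^ n * (2 ^ (ℓ + n) / ((ℓ + n)! : ℂ))) (2 ^ ℓ * phiC ℓ (2 * z)) := by
  have hcoeff : (fun n => 2 ^ ℓ * ((2 * z) ^ n / ((ℓ + n)! : ℂ)))
      = fun n => z ^ n * (2 ^ (ℓ + n) / ((ℓ + n)! : ℂ)) := by
    funext n
    rw [pow_add, mul_pow]
    ring
  exact hcoeff ▸ (hasSum_phiC ℓ (2 * z)).mul_left (2 ^ ℓ)

theorem stmt10_general (ℓ : ℕ) (z : ℂ) :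
    phiC ℓ (2 * z) =
      ((2 : ℂ) ^ ℓ)⁻¹ *
        (Complex.exp z * phiC ℓ z +
          ∑ j ∈ Finset.Icc 1 ℓ, phiC j z / (((ℓ - j).factorial : ℕ) : ℂ)) := by
  rw [eq_inv_mul_iff_mul_eq₀ (pow_ne_zero ℓ two_ne_zero)]
  refine (hasSum_two_pow_mul_phiC_two_mul ℓ z).unique ?_
  simpa only [← mul_add, sum_range_add_sum_Icc_inv_factorial_mul] using
    (hasSum_exp_mul_phiC ℓ z).add (hasSum_sum_Icc_phiC_div_factorial ℓ z)

/-- For every integer `ℓ ≥ 1` and every `z ∈ ℂ`,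
`φ_ℓ(2z) = 2^{−ℓ} [ e^z φ_ℓ(z) + Σ_{j=1}^{ℓ} φ_j(z)/(ℓ−j)! ]`. -/
theorem stmt10 (ℓ : ℕ) (hℓ : 1 ≤ ℓ) (z : ℂ) :
    phiC ℓ (2 * z) =
      ((2 : ℂ) ^ ℓ)⁻¹ *
        (Complex.exp z * phiC ℓ z +
          ∑ j ∈ Finset.Icc 1 ℓ, phiC j z / (((ℓ - j).factorial : ℕ) : ℂ)) :=
  stmt10_general ℓ z
end

section
/- For every integer ℓ ≥ 1 and every real number z < 0, φ_ℓ(2z)/φ_ℓ(z) ≥ (ℓ(ℓ+1−z)) / ((ℓ+1)(ℓ−2z)). -/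
/-!
For `ℓ = m + 1` and `x ≠ 0`, the recurrence `φ_ℓ(x) = 1/ℓ! + x φ_{ℓ+1}(x)` together with
`d/du [(1-u)^{n+1} e^{xu}] = x (1-u)^{n+1} e^{xu} - (n+1) (1-u)^n e^{xu}` gives
`m! φ_{m+1}(x) = ∫₀¹ (1-u)^m e^{xu} du`, so `φ_{m+1}(x) > 0`.
In this representation `m! ((m+2)(m+1-2z) φ_{m+1}(2z) - (m+1)(m+2-z) φ_{m+1}(z))` is the
integral of `G + H'`, where `H(u) = ((m+2-zu) e^{zu} - (m+2) e^{2zu}) (1-u)^{m+1}` vanishes at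
`u = 0` and `u = 1`, and `G(u) = u (1-u)^m (-2z (m+2) e^{2zu} + z² (1-u) e^{zu}) ≥ 0` for `z ≤ 0`.
-/

/-- For an integer `ℓ ≥ 0` and real `x`, `φ_ℓ(x) := Σ_{k=0}^∞ x^k/(ℓ+k)!` (real valued). -/
noncomputable def phiR (ℓ : ℕ) (x : ℝ) : ℝ := ∑' k : ℕ, x ^ k / ((ℓ + k).factorial : ℝ)

open Real intervalIntegral

lemma summable_pow_div_factorial_add (ℓ : ℕ) (x : ℝ) :
    Summable fun k : ℕ => x ^ k / ((ℓ + k).factorial : ℝ) := by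
  refine .of_norm_bounded (Real.summable_pow_div_factorial |x|) fun k => ?_
  rw [norm_div, norm_pow, Real.norm_eq_abs, RCLike.norm_natCast]
  gcongr
  exact Nat.le_add_left k ℓ

lemma phiR_zero_left (x : ℝ) : phiR 0 x = exp x := by
  simp [phiR, Real.exp_eq_exp_ℝ, NormedSpace.exp_eq_tsum_div]

lemma phiR_eq_inv_factorial_add_mul (ℓ : ℕ) (x : ℝ) :
    phiR ℓ x = 1 / (ℓ.factorial : ℝ) + x * phiR (ℓ + 1) x := by
  rw [phiR, (summable_pow_div_factorial_add ℓ x).tsum_eq_zero_add, phiR, ← tsum_mul_left]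
  simp only [pow_zero, add_zero]
  congr 1
  exact tsum_congr fun k => by
    rw [pow_succ, add_right_comm ℓ 1 k, ← add_assoc]
    ring

lemma hasDerivAt_one_sub_pow_succ_mul_exp (n : ℕ) (a u : ℝ) :
    HasDerivAt (fun u => (1 - u) ^ (n + 1) * exp (a * u))
      (a * ((1 - u) ^ (n + 1) * exp (a * u)) - (n + 1) * ((1 - u) ^ n * exp (a * u))) u := by
  refine ((((hasDerivAt_id' u).const_sub 1).fun_pow (n + 1)).mul
    ((hasDerivAt_id' u).const_mul a).exp).congr_deriv ?_
  push_cast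
  ring

lemma mul_integral_exp_mul (x : ℝ) :
    x * ∫ u in (0 : ℝ)..1, exp (x * u) = exp x - 1 := by
  have hderiv (u : ℝ) : HasDerivAt (fun u => exp (x * u)) (x * exp (x * u)) u := by
    simpa [mul_comm] using ((hasDerivAt_id u).const_mul x).exp
  rw [← integral_const_mul, integral_eq_sub_of_hasDerivAt (fun u _ => hderiv u)
    (Continuous.intervalIntegrable (by fun_prop) _ _)]
  simp

lemma mul_integral_one_sub_pow_succ_mul_exp (n : ℕ) (x : ℝ) :
    x * ∫ u in (0 : ℝ)..1, (1 - u) ^ (n + 1) * exp (x * u)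
      = (n + 1) * (∫ u in (0 : ℝ)..1, (1 - u) ^ n * exp (x * u)) - 1 := by
  have hInt (f : ℝ → ℝ) (hf : Continuous f) : IntervalIntegrable f MeasureTheory.volume 0 1 :=
    hf.intervalIntegrable 0 1
  rw [← integral_const_mul, ← integral_const_mul, ← sub_eq_zero, ← sub_add,
    ← integral_sub (hInt _ (by fun_prop)) (hInt _ (by fun_prop)),
    integral_eq_sub_of_hasDerivAt (fun u _ => hasDerivAt_one_sub_pow_succ_mul_exp n x u)
      (hInt _ (by fun_prop))]
  simp

lemma factorial_mul_phiR_succ (m : ℕ) {x : ℝ} (hx : x ≠ 0) :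
    (m.factorial : ℝ) * phiR (m + 1) x = ∫ u in (0 : ℝ)..1, (1 - u) ^ m * exp (x * u) := by
  induction m with
  | zero =>
    refine mul_left_cancel₀ hx ?_
    have hrec := phiR_eq_inv_factorial_add_mul 0 x
    rw [phiR_zero_left] at hrec
    simp only [Nat.factorial_zero, Nat.cast_one, pow_zero, one_mul, mul_integral_exp_mul]
    linarith
  | succ m ih =>
    refine mul_left_cancel₀ hx ?_
    rw [mul_integral_one_sub_pow_succ_mul_exp, ← ih, phiR_eq_inv_factorial_add_mul (m + 1) x,
      Nat.factorial_succ]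
    have : (m.factorial : ℝ) ≠ 0 := by positivity
    push_cast
    field_simp
    ring

lemma phiR_succ_pos (m : ℕ) {x : ℝ} (hx : x ≠ 0) : 0 < phiR (m + 1) x := by
  have hint : 0 < ∫ u in (0 : ℝ)..1, (1 - u) ^ m * exp (x * u) := by
    refine intervalIntegral_pos_of_pos_on (Continuous.intervalIntegrable (by fun_prop) _ _)
      (fun u ⟨_, hu1⟩ => ?_) zero_lt_one
    have : 0 < 1 - u := sub_pos.mpr hu1
    positivity
  rw [← factorial_mul_phiR_succ m hx] at hint
  exact pos_of_mul_pos_right hint (Nat.cast_nonneg _)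

lemma mul_integral_one_sub_pow_mul_exp_le (m : ℕ) {z : ℝ} (hz : z ≤ 0) :
    (m + 1) * (m + 2 - z) * ∫ u in (0 : ℝ)..1, (1 - u) ^ m * exp (z * u)
      ≤ (m + 2) * (m + 1 - 2 * z) * ∫ u in (0 : ℝ)..1, (1 - u) ^ m * exp (2 * z * u) := by
  set F : ℝ → ℝ := fun u => (m + 2) * (m + 1 - 2 * z) * ((1 - u) ^ m * exp (2 * z * u))
    - (m + 1) * (m + 2 - z) * ((1 - u) ^ m * exp (z * u))
  set G : ℝ → ℝ := fun u => -(2 * z) * (m + 2) * u * (1 - u) ^ m * exp (2 * z * u)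
    + z ^ 2 * u * (1 - u) ^ (m + 1) * exp (z * u)
  set H : ℝ → ℝ := fun u => (m + 2 - z * u) * ((1 - u) ^ (m + 1) * exp (z * u))
    - (m + 2) * ((1 - u) ^ (m + 1) * exp (2 * z * u))
  have hH (u : ℝ) : HasDerivAt H (F u - G u) u := by
    refine ((((hasDerivAt_id' u).const_mul z).const_sub _).mul
      (hasDerivAt_one_sub_pow_succ_mul_exp m z u) |>.sub
      ((hasDerivAt_one_sub_pow_succ_mul_exp m (2 * z) u).const_mul _)).congr_deriv ?_
    simp only [F, G]
    ring
  have hInt (f : ℝ → ℝ) (hf : Continuous f) : IntervalIntegrable f MeasureTheory.volume 0 1 :=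
    hf.intervalIntegrable 0 1
  have hFG : ∫ u in (0 : ℝ)..1, F u = ∫ u in (0 : ℝ)..1, G u := by
    rw [← sub_eq_zero, ← integral_sub (hInt F (by fun_prop)) (hInt G (by fun_prop)),
      integral_eq_sub_of_hasDerivAt (fun u _ => hH u) (hInt _ (by fun_prop))]
    simp [H]
  have hG : 0 ≤ ∫ u in (0 : ℝ)..1, G u := by
    refine integral_nonneg zero_le_one fun u ⟨hu0, hu1⟩ => ?_
    have : 0 ≤ 1 - u := sub_nonneg.mpr hu1
    have : 0 ≤ -(2 * z) := by linarith
    positivity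
  rw [← sub_nonneg, ← integral_const_mul, ← integral_const_mul,
    ← integral_sub (hInt _ (by fun_prop)) (hInt _ (by fun_prop))]
  exact hFG ▸ hG

lemma mul_phiR_succ_le_mul_phiR_succ_two_mul (m : ℕ) {z : ℝ} (hz : z < 0) :
    (m + 1) * (m + 2 - z) * phiR (m + 1) z
      ≤ (m + 2) * (m + 1 - 2 * z) * phiR (m + 1) (2 * z) := by
  have h := mul_integral_one_sub_pow_mul_exp_le m hz.le
  rw [← factorial_mul_phiR_succ m hz.ne,
    ← factorial_mul_phiR_succ m (by linarith : 2 * z < 0).ne] at h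
  refine le_of_mul_le_mul_left ?_ (by positivity : (0 : ℝ) < m.factorial)
  linear_combination h

/-- For every integer `ℓ ≥ 1` and every real `z < 0`,
`φ_ℓ(2z)/φ_ℓ(z) ≥ ℓ(ℓ+1−z)/((ℓ+1)(ℓ−2z))`. -/
theorem stmt12 (ℓ : ℕ) (hℓ : 1 ≤ ℓ) (z : ℝ) (hz : z < 0) :
    phiR ℓ (2 * z) / phiR ℓ z ≥
      ((ℓ : ℝ) * ((ℓ : ℝ) + 1 - z)) / (((ℓ : ℝ) + 1) * ((ℓ : ℝ) - 2 * z)) := by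
  obtain ⟨m, rfl⟩ := Nat.exists_eq_add_of_le' hℓ
  have hφ := phiR_succ_pos m hz.ne
  have key := mul_phiR_succ_le_mul_phiR_succ_two_mul m hz
  rw [ge_iff_le, div_le_div_iff₀ (mul_pos (by positivity) (by linarith)) hφ]
  push_cast
  linear_combination key
end
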